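/- The unary representation theorem for monoidal profunctors: the end over all monoidal profunctors P of the set of functions P(A,B) → P(S,T) is isomorphic to the coproduct over n ∈ ℕ of (S → A^n) × (B^n → T). That is, ∫_{P monoidal profunctor} (P(A,B) → P(S,T)) ≅ Σ_{n∈ℕ} (S → A^n) × (B^n → T). -/

import Mathlib

universe u

/-!
Yoneda for the free monoidal profunctor `F` on the representable `(a, b) ↦ (a → A) × (B → b)`.
Concretely `F(a, b) = Σ n, (a → Aⁿ) × (Bⁿ → b)`: the unit sits at `n = 0`, multiplication
concatenates, and the generator is `⟨1, id, id⟩ ∈ F(A, B)`. The morphism `F → P` classifying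
`x : P(A, B)` sends `⟨n, f, g⟩` to `dimap f g xⁿ`, so naturality along it forces every element of
the end to be `x ↦ dimap f g xⁿ`, where `⟨n, f, g⟩` is its value at the generator. Conversely such
a family returns `⟨n, f, g⟩` at the generator, since the `n`-th power of the generator is
`⟨n, id, id⟩`.
-/

/-- A monoidal profunctor on `Set` (cartesian): a profunctor
`P : Set^op × Set → Set` together with a unit `e ∈ P(1,1)` and a natural
multiplication `m : P a b × P c d → P (a×c) (b×d)` satisfying the monoid laws
for Day convolution. -/
structure MonoPro : Type (u + 1) where
  obj : Type u → Type u → Type u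
  dimap : ∀ {a b c d : Type u}, (a → b) → (c → d) → obj b c → obj a d
  dimap_id : ∀ {a b : Type u} (p : obj a b), dimap id id p = p
  dimap_comp : ∀ {a a' a'' b b' b'' : Type u}
      (f : a' → a) (f' : a'' → a') (g : b → b') (g' : b' → b'') (p : obj a b),
    dimap (f ∘ f') (g' ∘ g) p = dimap f' g' (dimap f g p)
  e : obj PUnit PUnit
  m : ∀ {a b c d : Type u}, obj a b → obj c d → obj (a × c) (b × d)
  natural : ∀ {a b c d a' b' c' d' : Type u}
      (f : a' → a) (g : b → b') (h : c' → c) (k : d → d')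
      (p : obj a b) (q : obj c d),
    m (dimap f g p) (dimap h k q) = dimap (Prod.map f h) (Prod.map g k) (m p q)
  left_unit : ∀ {a b : Type u} (p : obj a b),
    dimap (fun x => (PUnit.unit, x)) Prod.snd (m e p) = p
  right_unit : ∀ {a b : Type u} (p : obj a b),
    dimap (fun x => (x, PUnit.unit)) Prod.fst (m p e) = p
  assoc : ∀ {a₁ b₁ a₂ b₂ a₃ b₃ : Type u}
      (p : obj a₁ b₁) (q : obj a₂ b₂) (r : obj a₃ b₃),
    dimap (fun x : a₁ × a₂ × a₃ => ((x.1, x.2.1), x.2.2))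
      (fun y : (b₁ × b₂) × b₃ => (y.1.1, (y.1.2, y.2)))
      (m (m p q) r) = m p (m q r)

/-- A morphism of monoidal profunctors: a natural transformation preserving
the unit and the multiplication. -/
structure MonoProHom (P Q : MonoPro.{u}) : Type (u + 1) where
  app : ∀ (a b : Type u), P.obj a b → Q.obj a b
  natural : ∀ {a b c d : Type u} (f : a → b) (g : c → d) (p : P.obj b c),
    app a d (P.dimap f g p) = Q.dimap f g (app b c p)
  unit : app PUnit PUnit P.e = Q.e
  mul : ∀ {a b c d : Type u} (p : P.obj a b) (q : P.obj c d),
    app (a × c) (b × d) (P.m p q) = Q.m (app a b p) (app c d q)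

/-- An element of the end `∫_{P monoidal profunctor} (P(A,B) → P(S,T))`: a
family of maps, one for each monoidal profunctor, commuting with
monoidal-profunctor morphisms. -/
structure MonoProEnd (A B S T : Type u) : Type (u + 1) where
  app : ∀ P : MonoPro.{u}, P.obj A B → P.obj S T
  natural : ∀ (P Q : MonoPro.{u}) (h : MonoProHom P Q) (x : P.obj A B),
    h.app S T (app P x) = app Q (h.app A B x)

namespace MonoPro

variable (P : MonoPro.{u})

lemma dimap_dimap {a a' a'' b b' b'' : Type u} (f : a' → a) (f' : a'' → a') (g : b → b')
    (g' : b' → b'') (p : P.obj a b) :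
    P.dimap f' g' (P.dimap f g p) = P.dimap (f ∘ f') (g' ∘ g) p :=
  (P.dimap_comp f f' g g' p).symm

lemma m_dimap_left {a a' b b' c d : Type u} (f : a' → a) (g : b → b') (p : P.obj a b)
    (q : P.obj c d) :
    P.m (P.dimap f g p) q = P.dimap (Prod.map f id) (Prod.map g id) (P.m p q) := by
  conv_lhs => rw [← P.dimap_id q]
  rw [P.natural]

lemma m_dimap_right {a b c c' d d' : Type u} (f : c' → c) (g : d → d') (p : P.obj a b)
    (q : P.obj c d) :
    P.m p (P.dimap f g q) = P.dimap (Prod.map id f) (Prod.map id g) (P.m p q) := by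
  conv_lhs => rw [← P.dimap_id p]
  rw [P.natural]

def pow {a b : Type u} (x : P.obj a b) : ∀ n : ℕ, P.obj (Fin n → a) (Fin n → b)
  | 0 => P.dimap (fun _ => PUnit.unit) (fun _ => Fin.elim0) P.e
  | n + 1 => P.dimap (fun v => (Fin.init v, v (Fin.last n))) (fun p => Fin.snoc p.1 p.2)
      (P.m (pow x n) x)

lemma dimap_pow_one {a b : Type u} (x : P.obj a b) :
    P.dimap (fun y _ => y) (fun v => v 0) (P.pow x 1) = x := by
  rw [pow, pow, m_dimap_left, dimap_dimap, dimap_dimap]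
  exact P.left_unit x

lemma pow_add {a b : Type u} (x : P.obj a b) (k : ℕ) : ∀ l : ℕ,
    P.pow x (k + l) =
      P.dimap (fun w => (fun i => w (Fin.castAdd l i), fun i => w (Fin.natAdd k i)))
        (fun p => Fin.append p.1 p.2) (P.m (P.pow x k) (P.pow x l))
  | 0 => by
      rw [pow, m_dimap_right, dimap_dimap]
      refine (P.right_unit (P.pow x k)).symm.trans ?_
      congr 1
      funext p
      exact (Fin.append_elim0 p.1).symm
  | l + 1 => by
      change P.pow x ((k + l) + 1) = _
      rw [pow, pow_add x k l, m_dimap_left, dimap_dimap, pow, m_dimap_right, dimap_dimap,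
        ← P.assoc, dimap_dimap]
      congr 1
      funext p
      exact (Fin.append_snoc p.1.1 p.1.2 p.2).symm

abbrev FreeObj (A B a b : Type u) : Type u :=
  Σ n : ℕ, (a → Fin n → A) × ((Fin n → B) → b)

lemma FreeObj.ext {A B a b : Type u} {n n' : ℕ} {f : a → Fin n → A} {g : (Fin n → B) → b}
    {f' : a → Fin n' → A} {g' : (Fin n' → B) → b} (h : n = n')
    (hf : ∀ x i, f x i = f' x (Fin.cast h i))
    (hg : ∀ v : Fin n' → B, g (fun i => v (Fin.cast h i)) = g' v) :
    (⟨n, f, g⟩ : FreeObj A B a b) = ⟨n', f', g'⟩ := by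
  subst h
  obtain rfl : f = f' := funext₂ hf
  obtain rfl : g = g' := funext hg
  rfl

abbrev free (A B : Type u) : MonoPro.{u} where
  obj := FreeObj A B
  dimap f g p := ⟨p.1, fun x => p.2.1 (f x), fun v => g (p.2.2 v)⟩
  dimap_id _ := rfl
  dimap_comp _ _ _ _ _ := rfl
  e := ⟨0, fun _ => Fin.elim0, fun _ => PUnit.unit⟩
  m p q := ⟨p.1 + q.1, fun z => Fin.append (p.2.1 z.1) (q.2.1 z.2),
    fun v => (p.2.2 fun i => v (Fin.castAdd q.1 i), q.2.2 fun i => v (Fin.natAdd p.1 i))⟩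
  natural _ _ _ _ _ _ := rfl
  left_unit := by
    rintro _ _ ⟨n, f, g⟩
    refine FreeObj.ext (Nat.zero_add n) (fun x i => congrFun (Fin.elim0_append (f x)) i)
      fun v => congrArg g (funext fun i => congrArg v (Fin.ext (by simp)))
  right_unit := by
    rintro _ _ ⟨n, f, g⟩
    refine FreeObj.ext rfl (fun x i => congrFun (Fin.append_elim0 (f x)) i)
      fun v => congrArg g (funext fun i => congrArg v (Fin.ext (by simp)))
  assoc := by
    rintro _ _ _ _ _ _ ⟨k₁, f₁, g₁⟩ ⟨k₂, f₂, g₂⟩ ⟨k₃, f₃, g₃⟩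
    refine FreeObj.ext (Nat.add_assoc k₁ k₂ k₃)
      (fun x i => congrFun (Fin.append_assoc (f₁ x.1) (f₂ x.2.1) (f₃ x.2.2)) i) fun v => ?_
    refine Prod.ext ?_ (Prod.ext ?_ ?_)
    · exact congrArg g₁ (funext fun i => congrArg v (Fin.ext (by simp)))
    · exact congrArg g₂ (funext fun i => congrArg v (Fin.ext (by simp)))
    · exact congrArg g₃ (funext fun i => congrArg v (Fin.ext (by simp [Nat.add_assoc])))

def free.gen (A B : Type u) : (free A B).obj A B :=
  ⟨1, fun y _ => y, fun v => v 0⟩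

lemma free_pow_gen (A B : Type u) :
    ∀ n : ℕ, (free A B).pow (free.gen A B) n = (⟨n, id, id⟩ : FreeObj A B _ _)
  | 0 => FreeObj.ext rfl (fun _ i => i.elim0) fun _ => funext fun i => i.elim0
  | n + 1 => by
      rw [pow, free_pow_gen A B n]
      refine FreeObj.ext rfl (fun w i => ?_) fun v => ?_
      · exact (congrFun (Fin.append_right_eq_snoc (Fin.init w) fun _ => w (Fin.last n)) i).trans
          (congrFun (Fin.snoc_init_self w) i)
      · change Fin.snoc (Fin.init v) (v (Fin.cast rfl (Fin.natAdd n 0))) = v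
        rw [show Fin.cast rfl (Fin.natAdd n (0 : Fin 1)) = Fin.last n from Fin.ext (by simp),
          Fin.snoc_init_self]

end MonoPro

namespace MonoProHom

variable {P Q : MonoPro.{u}}

lemma map_pow (h : MonoProHom P Q) {a b : Type u} (x : P.obj a b) :
    ∀ n : ℕ, h.app _ _ (P.pow x n) = Q.pow (h.app a b x) n
  | 0 => by rw [MonoPro.pow, MonoPro.pow, h.natural, h.unit]
  | n + 1 => by rw [MonoPro.pow, MonoPro.pow, h.natural, h.mul, map_pow h x n]

def freeLift {A B : Type u} (x : P.obj A B) : MonoProHom (MonoPro.free A B) P where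
  app _ _ q := P.dimap q.2.1 q.2.2 (P.pow x q.1)
  natural f g p := P.dimap_comp p.2.1 f p.2.2 g (P.pow x p.1)
  unit := by
    change P.dimap (fun _ => Fin.elim0) (fun _ => PUnit.unit)
      (P.dimap (fun _ => PUnit.unit) (fun _ => Fin.elim0) P.e) = P.e
    rw [MonoPro.dimap_dimap]
    exact P.dimap_id P.e
  mul p q := by
    change P.dimap _ _ (P.pow x (p.1 + q.1)) = _
    rw [MonoPro.pow_add, MonoPro.dimap_dimap, P.natural]
    congr 1
    · funext z
      exact Prod.ext (funext (Fin.append_left _ _)) (funext (Fin.append_right _ _))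
    · funext v
      exact Prod.ext (congrArg p.2.2 (funext (Fin.append_left _ _)))
        (congrArg q.2.2 (funext (Fin.append_right _ _)))

lemma freeLift_app_gen {A B : Type u} (x : P.obj A B) :
    (freeLift x).app A B (MonoPro.free.gen A B) = x :=
  P.dimap_pow_one x

end MonoProHom

namespace MonoProEnd

variable {A B S T : Type u}

lemma ext {θ θ' : MonoProEnd A B S T} (h : ∀ P x, θ.app P x = θ'.app P x) : θ = θ' := by
  obtain ⟨app, _⟩ := θ
  obtain ⟨app', _⟩ := θ'
  obtain rfl : app = app' := funext₂ h
  rfl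

def ofFreeObj (s : MonoPro.FreeObj A B S T) : MonoProEnd A B S T where
  app P x := P.dimap s.2.1 s.2.2 (P.pow x s.1)
  natural P Q h x := by rw [h.natural, h.map_pow]

def evalGen (θ : MonoProEnd A B S T) : MonoPro.FreeObj A B S T :=
  θ.app (MonoPro.free A B) (MonoPro.free.gen A B)

lemma evalGen_ofFreeObj (s : MonoPro.FreeObj A B S T) : evalGen (ofFreeObj s) = s := by
  change (MonoPro.free A B).dimap _ _ _ = s
  rw [MonoPro.free_pow_gen]
  rfl

lemma ofFreeObj_evalGen (θ : MonoProEnd A B S T) : ofFreeObj (evalGen θ) = θ :=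
  ext fun P x => (θ.natural _ P (MonoProHom.freeLift x) (MonoPro.free.gen A B)).trans
    (congrArg (θ.app P) (MonoProHom.freeLift_app_gen x))

def equivFreeObj : MonoProEnd A B S T ≃ MonoPro.FreeObj A B S T where
  toFun := evalGen
  invFun := ofFreeObj
  left_inv := ofFreeObj_evalGen
  right_inv := evalGen_ofFreeObj

end MonoProEnd

/-- the unary representation theorem for monoidal profunctors:
`∫_{P monoidal profunctor} (P(A,B) → P(S,T)) ≅ Σ_{n ∈ ℕ} (S → Aⁿ) × (Bⁿ → T)`. -/
theorem monoPro_unary_representation (A B S T : Type u) :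
    Nonempty (MonoProEnd A B S T ≃
      Σ n : ℕ, (S → (Fin n → A)) × ((Fin n → B) → T)) :=
  ⟨MonoProEnd.equivFreeObj⟩
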